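/- arXiv:1806.08770 — 4 statements merged into one kernel-verified Lean document; each statement's English description precedes it below -/
import Mathlib

section
/- Let P be a finite point set in the plane. The rectangle of influence graph of P is a subgraph of every xy-monotone spanning geometric graph of P; consequently it is simultaneously the unique xy-monotone spanning graph of P of minimum cost (sum of Euclidean edge lengths) and the unique xy-monotone spanning graph of P with the fewest edges. -/
open scoped BigOperators

noncomputable section

/-- A point in the Euclidean plane. -/
abbrev Pt : Type := EuclideanSpace ℝ (Fin 2)

noncomputable instance : DecidableEq Pt := Classical.decEq _

/-- A real sequence is monotone (increasing or decreasing) on indices `0..t`. -/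
def MonoTo (f : ℕ → ℝ) (t : ℕ) : Prop :=
  (∀ i j : ℕ, i ≤ j → j ≤ t → f i ≤ f j) ∨ (∀ i j : ℕ, i ≤ j → j ≤ t → f j ≤ f i)

/-- A point sequence is `y`-monotone on indices `0..t`. -/
def YMono (q : ℕ → Pt) (t : ℕ) : Prop := MonoTo (fun i => q i 1) t

/-- A point sequence is `xy`-monotone on indices `0..t`. -/
def XYMono (q : ℕ → Pt) (t : ℕ) : Prop :=
  MonoTo (fun i => q i 0) t ∧ MonoTo (fun i => q i 1) t

/-- `E` is the edge set of a geometric graph with vertex set `P` (no loops). -/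
def IsGraphOn (P : Finset Pt) (E : Finset (Sym2 Pt)) : Prop :=
  ∀ p q : Pt, s(p, q) ∈ E → p ∈ P ∧ q ∈ P ∧ p ≠ q

/-- `w 0, …, w t` is a path of `E` from `a` to `b`. -/
def IsPathBetween (E : Finset (Sym2 Pt)) (w : ℕ → Pt) (t : ℕ) (a b : Pt) : Prop :=
  w 0 = a ∧ w t = b ∧ ∀ i : ℕ, i < t → s(w i, w (i + 1)) ∈ E

/-- `a` and `b` are connected by a `y`-monotone path of `E`. -/
def ConnYMono (E : Finset (Sym2 Pt)) (a b : Pt) : Prop :=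
  ∃ w t, IsPathBetween E w t a b ∧ YMono w t

/-- `a` and `b` are connected by an `xy`-monotone path of `E`. -/
def ConnXYMono (E : Finset (Sym2 Pt)) (a b : Pt) : Prop :=
  ∃ w t, IsPathBetween E w t a b ∧ XYMono w t

/-- Cost of a geometric graph: sum of Euclidean lengths of edges. -/
def cost (E : Finset (Sym2 Pt)) : ℝ :=
  ∑ e ∈ E, Sym2.lift ⟨fun p q => dist p q, fun p q => dist_comm p q⟩ e

/-- Closed axis-aligned rectangle with corners `p` and `q`. -/
def Rect (p q : Pt) : Set Pt :=
  {z | min (p 0) (q 0) ≤ z 0 ∧ z 0 ≤ max (p 0) (q 0) ∧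
       min (p 1) (q 1) ≤ z 1 ∧ z 1 ≤ max (p 1) (q 1)}

/-- `p` and `q` are rectangularly visible in `P`. -/
def RectVisible (P : Finset Pt) (p q : Pt) : Prop :=
  ∀ r ∈ P, r ∈ Rect p q → r = p ∨ r = q

/-- Adjacency in the rectangle of influence graph of `P`. -/
def RIGAdj (P : Finset Pt) (a b : Pt) : Prop :=
  a ∈ P ∧ b ∈ P ∧ a ≠ b ∧ RectVisible P a b

/-- A spanning graph on vertex set `V` in which every root in `R` is connected
to every vertex by a `y`-monotone path. -/
def RootedSpan (V R : Finset Pt) (E : Finset (Sym2 Pt)) : Prop :=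
  IsGraphOn V E ∧ ∀ r ∈ R, ∀ p ∈ V, ConnYMono E r p

/-- `E` is a minimum-cost rooted `y`-monotone spanning graph of `V` with roots `R`. -/
def IsMinRooted (V R : Finset Pt) (E : Finset (Sym2 Pt)) : Prop :=
  RootedSpan V R E ∧ ∀ E', RootedSpan V R E' → cost E ≤ cost E'

/-- First rotated coordinate (rotation of axes by angle `θ`). -/
def rotX (θ : ℝ) (z : Pt) : ℝ := Real.cos θ * z 0 + Real.sin θ * z 1

/-- Second rotated coordinate (rotation of axes by angle `θ`). -/
def rotY (θ : ℝ) (z : Pt) : ℝ := -Real.sin θ * z 0 + Real.cos θ * z 1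

/-- Closed rectangle with corners `p`, `q` w.r.t. the axes rotated by `θ`. -/
def RectRot (θ : ℝ) (p q : Pt) : Set Pt :=
  {z | min (rotX θ p) (rotX θ q) ≤ rotX θ z ∧ rotX θ z ≤ max (rotX θ p) (rotX θ q) ∧
       min (rotY θ p) (rotY θ q) ≤ rotY θ z ∧ rotY θ z ≤ max (rotY θ p) (rotY θ q)}

/-- Points of `P` rectangularly visible from `p` w.r.t. the axes rotated by `θ`. -/
def RVrot (θ : ℝ) (P : Finset Pt) (p : Pt) : Set Pt :=
  {q | q ∈ P ∧ q ≠ p ∧ ∀ r ∈ P, r ∈ RectRot θ p q → r = p ∨ r = q}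

/-- Adjacency in the rectangle of influence graph of `P` w.r.t. the axes rotated by `θ`. -/
def RIGrotAdj (θ : ℝ) (P : Finset Pt) (a b : Pt) : Prop :=
  a ∈ P ∧ b ∈ P ∧ a ≠ b ∧ ∀ r ∈ P, r ∈ RectRot θ a b → r = a ∨ r = b

/-!
If `a` and `b` are adjacent in the rectangle of influence graph, the first step of any
`xy`-monotone path from `a` to `b` stays in the rectangle `Rect a b`, whose only points of `P`
are `a` and `b`; hence that step is the edge `ab` itself. Conversely, the rectangle of influence
graph is `xy`-monotone: from `a` walk to a point `r ≠ a` of `Rect a b` whose own rectangle with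
`a` contains as few points as possible, so that `ar` is an edge, and continue inside the smaller
rectangle `Rect r b`. Minimality of cost and edge number follows because every edge of a
loopless geometric graph has positive length.
-/

open Set

lemma MonoTo.mem_uIcc {f : ℕ → ℝ} {t i : ℕ} (h : MonoTo f t) (hi : i ≤ t) :
    f i ∈ uIcc (f 0) (f t) := by
  rcases h with h | h
  · exact mem_uIcc_of_le (h 0 i i.zero_le hi) (h i t hi le_rfl)
  · exact mem_uIcc_of_ge (h i t hi le_rfl) (h 0 i i.zero_le hi)

lemma monoTo_of_forall_mem_uIcc {f : ℕ → ℝ} {t : ℕ}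
    (h : ∀ i j, i ≤ j → j ≤ t → f j ∈ uIcc (f i) (f t)) : MonoTo f t := by
  rcases le_total (f 0) (f t) with h0 | h0
  · refine Or.inl fun i j hij hjt => ?_
    have hi : f i ≤ f t := (uIcc_of_le h0 ▸ h 0 i i.zero_le (hij.trans hjt)).2
    exact (uIcc_of_le hi ▸ h i j hij hjt).1
  · refine Or.inr fun i j hij hjt => ?_
    have hi : f t ≤ f i := (uIcc_of_ge h0 ▸ h 0 i i.zero_le (hij.trans hjt)).1
    exact (uIcc_of_ge hi ▸ h i j hij hjt).2

lemma mem_Rect {p q z : Pt} :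
    z ∈ Rect p q ↔ z 0 ∈ uIcc (p 0) (q 0) ∧ z 1 ∈ uIcc (p 1) (q 1) :=
  and_assoc.symm

lemma left_mem_Rect (p q : Pt) : p ∈ Rect p q :=
  mem_Rect.2 ⟨left_mem_uIcc, left_mem_uIcc⟩

lemma right_mem_Rect (p q : Pt) : q ∈ Rect p q :=
  mem_Rect.2 ⟨right_mem_uIcc, right_mem_uIcc⟩

lemma Rect_comm (p q : Pt) : Rect p q = Rect q p := by
  ext z
  simp only [mem_Rect, uIcc_comm]

lemma Rect_subset_Rect_left {a b r : Pt} (hr : r ∈ Rect a b) : Rect a r ⊆ Rect a b :=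
  fun _ hz => mem_Rect.2
    ⟨uIcc_subset_uIcc_left (mem_Rect.1 hr).1 (mem_Rect.1 hz).1,
      uIcc_subset_uIcc_left (mem_Rect.1 hr).2 (mem_Rect.1 hz).2⟩

lemma Rect_subset_Rect_right {a b r : Pt} (hr : r ∈ Rect a b) : Rect r b ⊆ Rect a b :=
  fun _ hz => mem_Rect.2
    ⟨uIcc_subset_uIcc_right (mem_Rect.1 hr).1 (mem_Rect.1 hz).1,
      uIcc_subset_uIcc_right (mem_Rect.1 hr).2 (mem_Rect.1 hz).2⟩

lemma eq_of_mem_Rect_of_mem_Rect {a b c : Pt} (hb : b ∈ Rect a c) (hc : c ∈ Rect a b) :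
    b = c := by
  have h0 := eq_of_mem_uIcc_of_mem_uIcc' (mem_Rect.1 hb).1 (mem_Rect.1 hc).1
  have h1 := eq_of_mem_uIcc_of_mem_uIcc' (mem_Rect.1 hb).2 (mem_Rect.1 hc).2
  ext i
  fin_cases i
  exacts [h0, h1]

lemma XYMono.mem_Rect {w : ℕ → Pt} {t i : ℕ} (h : XYMono w t) (hi : i ≤ t) :
    w i ∈ Rect (w 0) (w t) :=
  _root_.mem_Rect.2 ⟨h.1.mem_uIcc hi, h.2.mem_uIcc hi⟩

/-- A form of `xy`-monotonicity that survives prepending a vertex (`IsRectMonotone.cons`). -/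
def IsRectMonotone (w : ℕ → Pt) (t : ℕ) : Prop :=
  ∀ i j, i ≤ j → j ≤ t → w j ∈ Rect (w i) (w t)

lemma IsRectMonotone.xyMono {w : ℕ → Pt} {t : ℕ} (h : IsRectMonotone w t) : XYMono w t :=
  ⟨monoTo_of_forall_mem_uIcc fun i j hij hjt => (mem_Rect.1 (h i j hij hjt)).1,
    monoTo_of_forall_mem_uIcc fun i j hij hjt => (mem_Rect.1 (h i j hij hjt)).2⟩

def pathCons (a : Pt) (w : ℕ → Pt) : ℕ → Pt
  | 0 => a
  | i + 1 => w i

lemma IsPathBetween.cons {E : Finset (Sym2 Pt)} {w : ℕ → Pt} {t : ℕ} {a r b : Pt}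
    (hw : IsPathBetween E w t r b) (har : s(a, r) ∈ E) :
    IsPathBetween E (pathCons a w) (t + 1) a b := by
  obtain ⟨hw0, hwt, hedge⟩ := hw
  refine ⟨rfl, hwt, fun i hi => ?_⟩
  cases i with
  | zero => simpa [pathCons, hw0] using har
  | succ i => exact hedge i (by omega)

lemma IsRectMonotone.cons {w : ℕ → Pt} {t : ℕ} {a : Pt} (hw : IsRectMonotone w t)
    (ha : w 0 ∈ Rect a (w t)) : IsRectMonotone (pathCons a w) (t + 1) := by
  rintro (_ | i) (_ | j) hij hjt
  · exact left_mem_Rect _ _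
  · exact Rect_subset_Rect_right ha (hw 0 j j.zero_le (by omega))
  · omega
  · exact hw i j (by omega) (by omega)

open scoped Classical in
def rectPoints (P : Finset Pt) (a b : Pt) : Finset Pt :=
  {z ∈ P | z ∈ Rect a b}

section RIG

variable {P : Finset Pt}

lemma mem_rectPoints {a b z : Pt} : z ∈ rectPoints P a b ↔ z ∈ P ∧ z ∈ Rect a b := by
  simp [rectPoints]

lemma rectPoints_comm (a b : Pt) : rectPoints P a b = rectPoints P b a := by
  rw [rectPoints, rectPoints, Rect_comm]

lemma rectPoints_ssubset {a b r : Pt} (hb : b ∈ P) (hr : r ∈ Rect a b) (hrb : r ≠ b) :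
    rectPoints P a r ⊂ rectPoints P a b := by
  refine Finset.ssubset_iff_of_subset (fun z hz => ?_) |>.2 ⟨b, ?_, fun hb' => ?_⟩
  · obtain ⟨hzP, hz⟩ := mem_rectPoints.1 hz
    exact mem_rectPoints.2 ⟨hzP, Rect_subset_Rect_left hr hz⟩
  · exact mem_rectPoints.2 ⟨hb, right_mem_Rect a b⟩
  · exact hrb (eq_of_mem_Rect_of_mem_Rect hr (mem_rectPoints.1 hb').2)

/-- A point `r ≠ a` of `Rect a b` minimising the number of points in `Rect a r` sees `a`. -/
lemma exists_rigAdj_mem_Rect {a b : Pt} (ha : a ∈ P) (hb : b ∈ P) (hab : a ≠ b) :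
    ∃ r, RIGAdj P a r ∧ r ∈ Rect a b := by
  have hne : ((rectPoints P a b).erase a).Nonempty :=
    ⟨b, Finset.mem_erase.2 ⟨hab.symm, mem_rectPoints.2 ⟨hb, right_mem_Rect a b⟩⟩⟩
  obtain ⟨r, hr, hmin⟩ := ((rectPoints P a b).erase a).exists_min_image
    (fun z => (rectPoints P a z).card) hne
  obtain ⟨hra, hrP, hrRect⟩ :=
    (Finset.mem_erase.1 hr).imp_right fun h => mem_rectPoints.1 h
  refine ⟨r, ⟨ha, hrP, hra.symm, fun s hsP hsRect => or_iff_not_imp_left.2 fun hsa => ?_⟩,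
    hrRect⟩
  by_contra hsr
  have hs : s ∈ (rectPoints P a b).erase a :=
    Finset.mem_erase.2 ⟨hsa, mem_rectPoints.2 ⟨hsP, Rect_subset_Rect_left hrRect hsRect⟩⟩
  exact (hmin s hs).not_gt (Finset.card_lt_card (rectPoints_ssubset hrP hsRect hsr))

theorem exists_rectMonotone_path_of_rigAdj_subset {E : Finset (Sym2 Pt)}
    (hE : ∀ a b, RIGAdj P a b → s(a, b) ∈ E) {a b : Pt} (ha : a ∈ P) (hb : b ∈ P) :
    ∃ w t, IsPathBetween E w t a b ∧ IsRectMonotone w t := by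
  by_cases hab : a = b
  · subst hab
    exact ⟨fun _ => a, 0, ⟨rfl, rfl, by omega⟩, fun _ _ _ _ => left_mem_Rect a a⟩
  obtain ⟨r, har, hrRect⟩ := exists_rigAdj_mem_Rect ha hb hab
  have hdecr : (rectPoints P r b).card < (rectPoints P a b).card := by
    rw [rectPoints_comm r, rectPoints_comm a]
    exact Finset.card_lt_card (rectPoints_ssubset ha (Rect_comm a b ▸ hrRect) (Ne.symm har.2.2.1))
  obtain ⟨w, t, hw, hmono⟩ := exists_rectMonotone_path_of_rigAdj_subset hE har.2.1 hb
  refine ⟨pathCons a w, t + 1, hw.cons (hE a r har), hmono.cons ?_⟩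
  rw [hw.1, hw.2.1]
  exact hrRect
termination_by (rectPoints P a b).card

lemma RIGAdj.mem_of_connXYMono {E : Finset (Sym2 Pt)} {a b : Pt} (hE : IsGraphOn P E)
    (hab : RIGAdj P a b) (hconn : ConnXYMono E a b) : s(a, b) ∈ E := by
  obtain ⟨-, -, hab, hvis⟩ := hab
  obtain ⟨w, t, ⟨hw0, hwt, hedge⟩, hmono⟩ := hconn
  have ht : 0 < t := Nat.pos_of_ne_zero fun h => hab (hw0.symm.trans (h ▸ hwt))
  have hfirst := hedge 0 ht
  obtain ⟨-, hw1P, hw01⟩ := hE _ _ hfirst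
  have hw1 : w 1 ∈ Rect a b := hw0 ▸ hwt ▸ hmono.mem_Rect ht
  rcases hvis (w 1) hw1P hw1 with h | h
  · exact absurd (hw0.trans h.symm) hw01
  · rwa [hw0, h] at hfirst

lemma subset_of_forall_connXYMono {ER E : Finset (Sym2 Pt)}
    (hER : ∀ a b, s(a, b) ∈ ER → RIGAdj P a b) (hE : IsGraphOn P E)
    (hconn : ∀ a ∈ P, ∀ b ∈ P, ConnXYMono E a b) : ER ⊆ E := by
  intro e
  induction e using Sym2.ind with
  | _ a b =>
    intro he
    have hab := hER a b he
    exact hab.mem_of_connXYMono hE (hconn a hab.1 b hab.2.1)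

end RIG

section Cost

variable {P : Finset Pt} {E F : Finset (Sym2 Pt)}

lemma IsGraphOn.length_pos (hE : IsGraphOn P E) {e : Sym2 Pt} (he : e ∈ E) :
    0 < Sym2.lift ⟨fun p q => dist p q, fun p q => dist_comm p q⟩ e := by
  induction e using Sym2.ind with
  | _ p q => simpa using dist_pos.2 (hE p q he).2.2

lemma IsGraphOn.cost_le_of_subset (hE : IsGraphOn P E) (hFE : F ⊆ E) : cost F ≤ cost E :=
  Finset.sum_le_sum_of_subset_of_nonneg hFE fun _ he _ => (hE.length_pos he).le

lemma IsGraphOn.cost_lt_of_ssubset (hE : IsGraphOn P E) (hFE : F ⊂ E) : cost F < cost E := by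
  obtain ⟨e, he, heF⟩ := Finset.exists_of_ssubset hFE
  exact Finset.sum_lt_sum_of_subset hFE.subset he heF (hE.length_pos he)
    fun _ he' _ => (hE.length_pos he').le

end Cost

/-- the rectangle of influence graph of `P` is a subgraph of every
`xy`-monotone spanning graph of `P`; it is itself `xy`-monotone, and it is the unique
minimum-cost and the unique minimum-edge `xy`-monotone spanning graph of `P`. -/
theorem rig_is_unique_min_xyMonotone_spanning_graph (P : Finset Pt)
    (ER : Finset (Sym2 Pt)) (hER : ∀ a b : Pt, s(a, b) ∈ ER ↔ RIGAdj P a b) :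
    (∀ E : Finset (Sym2 Pt), IsGraphOn P E →
        (∀ a ∈ P, ∀ b ∈ P, ConnXYMono E a b) → ER ⊆ E) ∧
    IsGraphOn P ER ∧ (∀ a ∈ P, ∀ b ∈ P, ConnXYMono ER a b) ∧
    (∀ E : Finset (Sym2 Pt), IsGraphOn P E →
        (∀ a ∈ P, ∀ b ∈ P, ConnXYMono E a b) →
        cost ER ≤ cost E ∧ (cost E ≤ cost ER → E = ER) ∧
        ER.card ≤ E.card ∧ (E.card ≤ ER.card → E = ER)) := by
  have hsub : ∀ E, IsGraphOn P E → (∀ a ∈ P, ∀ b ∈ P, ConnXYMono E a b) → ER ⊆ E :=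
    fun E => subset_of_forall_connXYMono (fun a b => (hER a b).1)
  have hgraph : IsGraphOn P ER := fun p q he =>
    let ⟨hp, hq, hpq, _⟩ := (hER p q).1 he
    ⟨hp, hq, hpq⟩
  have hconn : ∀ a ∈ P, ∀ b ∈ P, ConnXYMono ER a b := fun a ha b hb =>
    let ⟨w, t, hw, hmono⟩ :=
      exists_rectMonotone_path_of_rigAdj_subset (fun a b => (hER a b).2) ha hb
    ⟨w, t, hw, hmono.xyMono⟩
  refine ⟨hsub, hgraph, hconn, fun E hE hconnE => ?_⟩
  have hs := hsub E hE hconnE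
  refine ⟨hE.cost_le_of_subset hs, fun hle => ?_, Finset.card_le_card hs,
    fun hle => (Finset.eq_of_subset_of_card_le hs hle).symm⟩
  by_contra hne
  exact (hE.cost_lt_of_ssubset (hs.ssubset_of_ne (Ne.symm hne))).not_ge hle

end
end

section
/- Let G = (P, E) be a geometric graph in which all points have distinct y-coordinates, with designated roots r_1, ..., r_k (1 < k < |P|) satisfying y(r_1) < ... < y(r_k). Then G is k-rooted y-monotone if and only if: (1) every p ∈ P with y(p) < y(r_1) has a neighbor q with y(p) < y(q) ≤ y(r_1); (2) every p ∈ P with y(p) > y(r_k) has a neighbor q with y(r_k) ≤ y(q) < y(p); (3) every p ∈ P with y(r_i) < y(p) < y(r_{i+1}) for some i has neighbors q_1, q_2 with y(r_i) ≤ y(q_1) < y(p) and y(p) < y(q_2) ≤ y(r_{i+1}); (4) r_1 has a neighbor q with y(r_1) < y(q) ≤ y(r_2); (5) r_k has a neighbor q with y(r_{k-1}) ≤ y(q) < y(r_k); and (6) for 2 ≤ i ≤ k−1, r_i has neighbors q_1, q_2 with y(r_{i−1}) ≤ y(q_1) < y(r_i) and y(r_i) < y(q_2) ≤ y(r_{i+1}).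 -/
open scoped BigOperators

noncomputable section

section AuxLemmas

private def btwCO (a b : ℝ) (z : Pt) : Prop := a ≤ z 1 ∧ z 1 < b
noncomputable instance (a b : ℝ) : DecidablePred (btwCO a b) := fun _ => Classical.propDecidable _
private def btwOC (a b : ℝ) (z : Pt) : Prop := a < z 1 ∧ z 1 ≤ b
noncomputable instance (a b : ℝ) : DecidablePred (btwOC a b) := fun _ => Classical.propDecidable _

private lemma swapEdge {E : Finset (Sym2 Pt)} {a b : Pt} (h : s(a, b) ∈ E) : s(b, a) ∈ E := by
  rwa [Sym2.eq_swap]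

/-- Extract last edge of an increasing y-monotone path. -/
private lemma extract_down {P : Finset Pt} {E : Finset (Sym2 Pt)} (hE : IsGraphOn P E)
    (hy : ∀ p ∈ P, ∀ q ∈ P, p ≠ q → p 1 ≠ q 1)
    {a b : Pt} (h : ConnYMono E a b) (hab : a 1 < b 1) :
    ∃ q, s(b, q) ∈ E ∧ a 1 ≤ q 1 ∧ q 1 < b 1 := by
  obtain ⟨w, t, ⟨h0, ht, he⟩, hm⟩ := h
  have ht0 : t ≠ 0 := by
    rintro rfl
    rw [h0] at ht
    rw [ht] at hab
    exact lt_irrefl _ hab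
  have hmono : ∀ i j : ℕ, i ≤ j → j ≤ t → w i 1 ≤ w j 1 := by
    rcases hm with h | h
    · exact h
    · intro i j hij hjt
      have h1 := h 0 t (Nat.zero_le _) le_rfl
      simp only at h1
      rw [h0, ht] at h1
      linarith
  have hedge := he (t - 1) (by omega)
  have htt : t - 1 + 1 = t := by omega
  rw [htt, ht] at hedge
  obtain ⟨hqP, hbP, hqb⟩ := hE _ _ hedge
  refine ⟨w (t - 1), swapEdge hedge, ?_, ?_⟩
  · have h2 := hmono 0 (t - 1) (Nat.zero_le _) (by omega)
    rw [h0] at h2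
    exact h2
  · have hle := hmono (t - 1) t (by omega) le_rfl
    rw [ht] at hle
    exact lt_of_le_of_ne hle (hy _ hqP _ hbP hqb)

/-- Extract last edge of a decreasing y-monotone path. -/
private lemma extract_up {P : Finset Pt} {E : Finset (Sym2 Pt)} (hE : IsGraphOn P E)
    (hy : ∀ p ∈ P, ∀ q ∈ P, p ≠ q → p 1 ≠ q 1)
    {a b : Pt} (h : ConnYMono E a b) (hab : b 1 < a 1) :
    ∃ q, s(b, q) ∈ E ∧ b 1 < q 1 ∧ q 1 ≤ a 1 := by
  obtain ⟨w, t, ⟨h0, ht, he⟩, hm⟩ := h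
  have ht0 : t ≠ 0 := by
    rintro rfl
    rw [h0] at ht
    rw [ht] at hab
    exact lt_irrefl _ hab
  have hmono : ∀ i j : ℕ, i ≤ j → j ≤ t → w j 1 ≤ w i 1 := by
    rcases hm with h | h
    · intro i j hij hjt
      have h1 := h 0 t (Nat.zero_le _) le_rfl
      simp only at h1
      rw [h0, ht] at h1
      linarith
    · exact h
  have hedge := he (t - 1) (by omega)
  have htt : t - 1 + 1 = t := by omega
  rw [htt, ht] at hedge
  obtain ⟨hqP, hbP, hqb⟩ := hE _ _ hedge
  refine ⟨w (t - 1), swapEdge hedge, ?_, ?_⟩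
  · have hle := hmono (t - 1) t (by omega) le_rfl
    rw [ht] at hle
    exact lt_of_le_of_ne hle (fun hh => hy _ hqP _ hbP hqb hh.symm)
  · have h2 := hmono 0 (t - 1) (Nat.zero_le _) (by omega)
    rw [h0] at h2
    exact h2

/-- Reverse a path. -/
private lemma path_reverse {E : Finset (Sym2 Pt)} {w : ℕ → Pt} {t : ℕ} {a b : Pt}
    (h : IsPathBetween E w t a b) :
    IsPathBetween E (fun j => w (t - j)) t b a := by
  obtain ⟨h0, ht, he⟩ := h
  refine ⟨by simpa using ht, by simpa using h0, ?_⟩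
  intro i hi
  have h1 : t - i = (t - (i + 1)) + 1 := by omega
  show s(w (t - i), w (t - (i + 1))) ∈ E
  rw [Sym2.eq_swap, h1]
  exact he _ (by omega)

/-- Build a decreasing path from p down to T, given a step-down property. -/
private lemma gen_down {P : Finset Pt} {E : Finset (Sym2 Pt)} (hE : IsGraphOn P E)
    (hinj : ∀ p ∈ P, ∀ q ∈ P, p 1 = q 1 → p = q)
    {T : Pt} (hT : T ∈ P)
    (step : ∀ p ∈ P, T 1 < p 1 → ∃ q, s(p, q) ∈ E ∧ T 1 ≤ q 1 ∧ q 1 < p 1) :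
    ∀ n p, p ∈ P → T 1 < p 1 →
      (P.filter (btwCO (T 1) (p 1))).card ≤ n →
      ∃ w t, IsPathBetween E w t p T ∧
        (∀ i j : ℕ, i ≤ j → j ≤ t → w j 1 ≤ w i 1) := by
  intro n
  induction n with
  | zero =>
    intro p hp hTp hcard
    obtain ⟨q, hq, hTq, hqp⟩ := step p hp hTp
    have hqP : q ∈ P := (hE p q hq).2.1
    have hmem : q ∈ P.filter (btwCO (T 1) (p 1)) := by
      simp only [Finset.mem_filter, btwCO, btwOC]
      exact ⟨hqP, hTq, hqp⟩
    have := Finset.card_pos.mpr ⟨q, hmem⟩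
    omega
  | succ n ih =>
    intro p hp hTp hcard
    obtain ⟨q, hq, hTq, hqp⟩ := step p hp hTp
    have hqP : q ∈ P := (hE p q hq).2.1
    rcases eq_or_lt_of_le hTq with heq | hlt
    · have hqT : q = T := hinj q hqP T hT heq.symm
      subst hqT
      refine ⟨fun j => if j = 0 then p else q, 1, ⟨by simp, by simp, ?_⟩, ?_⟩
      · intro i hi
        interval_cases i
        simpa using hq
      · intro i j hij hj
        interval_cases j <;> interval_cases i <;> simp [le_of_lt hqp, le_of_lt, hqp.le]
    · have hmem : q ∈ P.filter (btwCO (T 1) (p 1)) := by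
        simp only [Finset.mem_filter, btwCO, btwOC]
        exact ⟨hqP, hTq, hqp⟩
      have hsub : P.filter (btwCO (T 1) (q 1)) ⊂
          P.filter (btwCO (T 1) (p 1)) := by
        constructor
        · intro z hz
          simp only [Finset.mem_filter, btwCO, btwOC] at hz ⊢
          exact ⟨hz.1, hz.2.1, lt_trans hz.2.2 hqp⟩
        · intro hcon
          have := hcon hmem
          simp only [Finset.mem_filter, btwCO, btwOC] at this
          exact absurd this.2.2 (lt_irrefl _)
      have hcard' : (P.filter (btwCO (T 1) (q 1))).card ≤ n := by
        have := Finset.card_lt_card hsub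
        omega
      obtain ⟨w, t, ⟨hw0, hwt, hwe⟩, hmono⟩ := ih q hqP hlt hcard'
      refine ⟨fun j => if j = 0 then p else w (j - 1), t + 1, ⟨by simp, ?_, ?_⟩, ?_⟩
      · simp [hwt]
      · intro i hi
        rcases Nat.eq_zero_or_pos i with h0 | h0
        · subst h0
          simpa [hw0] using hq
        · have h1 : i ≠ 0 := h0.ne'
          have h2 : i + 1 ≠ 0 := by omega
          show s(if i = 0 then p else w (i - 1), if i + 1 = 0 then p else w (i + 1 - 1)) ∈ E
          rw [if_neg h1, if_neg h2]
          have h3 : i - 1 + 1 = i := by omega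
          have h4 : i + 1 - 1 = i - 1 + 1 := by omega
          rw [h4, ← h3]
          exact hwe (i - 1) (by omega)
      · intro i j hij hj
        rcases Nat.eq_zero_or_pos i with h0 | h0
        · subst h0
          rcases Nat.eq_zero_or_pos j with j0 | j0
          · subst j0; simp
          · show (if j = 0 then p else w (j - 1)) 1 ≤ (if (0:ℕ) = 0 then p else w 0) 1
            rw [if_neg j0.ne', if_pos rfl]
            have := hmono 0 (j - 1) (Nat.zero_le _) (by omega)
            rw [hw0] at this
            calc w (j - 1) 1 ≤ q 1 := this
              _ ≤ p 1 := hqp.le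
        · show (if j = 0 then p else w (j - 1)) 1 ≤ (if i = 0 then p else w (i - 1)) 1
          rw [if_neg h0.ne', if_neg (by omega : j ≠ 0)]
          exact hmono (i - 1) (j - 1) (by omega) (by omega)

/-- Build an increasing path from p up to T, given a step-up property. -/
private lemma gen_up {P : Finset Pt} {E : Finset (Sym2 Pt)} (hE : IsGraphOn P E)
    (hinj : ∀ p ∈ P, ∀ q ∈ P, p 1 = q 1 → p = q)
    {T : Pt} (hT : T ∈ P)
    (step : ∀ p ∈ P, p 1 < T 1 → ∃ q, s(p, q) ∈ E ∧ p 1 < q 1 ∧ q 1 ≤ T 1) :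
    ∀ n p, p ∈ P → p 1 < T 1 →
      (P.filter (btwOC (p 1) (T 1))).card ≤ n →
      ∃ w t, IsPathBetween E w t p T ∧
        (∀ i j : ℕ, i ≤ j → j ≤ t → w i 1 ≤ w j 1) := by
  intro n
  induction n with
  | zero =>
    intro p hp hTp hcard
    obtain ⟨q, hq, hpq, hqT⟩ := step p hp hTp
    have hqP : q ∈ P := (hE p q hq).2.1
    have hmem : q ∈ P.filter (btwOC (p 1) (T 1)) := by
      simp only [Finset.mem_filter, btwCO, btwOC]
      exact ⟨hqP, hpq, hqT⟩
    have := Finset.card_pos.mpr ⟨q, hmem⟩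
    omega
  | succ n ih =>
    intro p hp hTp hcard
    obtain ⟨q, hq, hpq, hqT⟩ := step p hp hTp
    have hqP : q ∈ P := (hE p q hq).2.1
    rcases eq_or_lt_of_le hqT with heq | hlt
    · have hqT' : q = T := hinj q hqP T hT heq
      subst hqT'
      refine ⟨fun j => if j = 0 then p else q, 1, ⟨by simp, by simp, ?_⟩, ?_⟩
      · intro i hi
        interval_cases i
        simpa using hq
      · intro i j hij hj
        interval_cases j <;> interval_cases i <;> simp [hpq.le]
    · have hmem : q ∈ P.filter (btwOC (p 1) (T 1)) := by
        simp only [Finset.mem_filter, btwCO, btwOC]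
        exact ⟨hqP, hpq, hqT⟩
      have hsub : P.filter (btwOC (q 1) (T 1)) ⊂
          P.filter (btwOC (p 1) (T 1)) := by
        constructor
        · intro z hz
          simp only [Finset.mem_filter, btwCO, btwOC] at hz ⊢
          exact ⟨hz.1, lt_trans hpq hz.2.1, hz.2.2⟩
        · intro hcon
          have := hcon hmem
          simp only [Finset.mem_filter, btwCO, btwOC] at this
          exact absurd this.2.1 (lt_irrefl _)
      have hcard' : (P.filter (btwOC (q 1) (T 1))).card ≤ n := by
        have := Finset.card_lt_card hsub
        omega
      obtain ⟨w, t, ⟨hw0, hwt, hwe⟩, hmono⟩ := ih q hqP hlt hcard'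
      refine ⟨fun j => if j = 0 then p else w (j - 1), t + 1, ⟨by simp, ?_, ?_⟩, ?_⟩
      · simp [hwt]
      · intro i hi
        rcases Nat.eq_zero_or_pos i with h0 | h0
        · subst h0
          simpa [hw0] using hq
        · have h1 : i ≠ 0 := h0.ne'
          have h2 : i + 1 ≠ 0 := by omega
          show s(if i = 0 then p else w (i - 1), if i + 1 = 0 then p else w (i + 1 - 1)) ∈ E
          rw [if_neg h1, if_neg h2]
          have h3 : i - 1 + 1 = i := by omega
          have h4 : i + 1 - 1 = i - 1 + 1 := by omega
          rw [h4, ← h3]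
          exact hwe (i - 1) (by omega)
      · intro i j hij hj
        rcases Nat.eq_zero_or_pos i with h0 | h0
        · subst h0
          rcases Nat.eq_zero_or_pos j with j0 | j0
          · subst j0; simp
          · show (if (0:ℕ) = 0 then p else w 0) 1 ≤ (if j = 0 then p else w (j - 1)) 1
            rw [if_neg j0.ne', if_pos rfl]
            have := hmono 0 (j - 1) (Nat.zero_le _) (by omega)
            rw [hw0] at this
            calc p 1 ≤ q 1 := hpq.le
              _ ≤ w (j - 1) 1 := this
        · show (if i = 0 then p else w (i - 1)) 1 ≤ (if j = 0 then p else w (j - 1)) 1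
          rw [if_neg h0.ne', if_neg (by omega : j ≠ 0)]
          exact hmono (i - 1) (j - 1) (by omega) (by omega)

/-- Monotonicity of root y-coordinates. -/
private lemma root_le {k : ℕ} {r : ℕ → Pt}
    (hinc : ∀ i : ℕ, 1 ≤ i → i < k → (r i) 1 < (r (i + 1)) 1) :
    ∀ j i, 1 ≤ i → i ≤ j → j ≤ k → r i 1 ≤ r j 1 := by
  intro j
  induction j with
  | zero => intro i h1 h2 _; omega
  | succ j ih =>
    intro i h1 h2 h3
    rcases Nat.eq_or_lt_of_le h2 with h | h
    · rw [h]
    · have hij : i ≤ j := by omega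
      have h4 : r i 1 ≤ r j 1 := ih i h1 hij (by omega)
      have h5 := hinc j (by omega) (by omega)
      linarith

/-- Locate a value between consecutive roots. -/
private lemma locate {k : ℕ} {r : ℕ → Pt}
    (hinc : ∀ i : ℕ, 1 ≤ i → i < k → (r i) 1 < (r (i + 1)) 1) (c : ℝ) :
    ∀ m i, 1 ≤ i → i < m → m ≤ k → r i 1 ≤ c → c < r m 1 →
      ∃ j, i ≤ j ∧ j + 1 ≤ m ∧ r j 1 ≤ c ∧ c < r (j + 1) 1 := by
  intro m
  induction m with
  | zero => intro i h1 h2 _ _ _; omega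
  | succ m ih =>
    intro i h1 him hmk hic hcm
    by_cases h : r m 1 ≤ c
    · exact ⟨m, by omega, le_rfl, h, hcm⟩
    · push_neg at h
      have him' : i < m := by
        rcases Nat.lt_or_ge i m with h' | h'
        · exact h'
        · exfalso
          have : i = m := by omega
          rw [this] at hic
          linarith
      obtain ⟨j, hj1, hj2, hj3, hj4⟩ := ih i h1 him' (by omega) hic h
      exact ⟨j, hj1, by omega, hj3, hj4⟩

end AuxLemmas

/-- characterization of `k`-rooted `y`-monotone graphs via neighbors. -/
theorem kRooted_yMonotone_characterization (P : Finset Pt) (E : Finset (Sym2 Pt))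
    (hE : IsGraphOn P E)
    (hy : ∀ p ∈ P, ∀ q ∈ P, p ≠ q → p 1 ≠ q 1)
    (k : ℕ) (hk1 : 1 < k) (hkP : k < P.card)
    (r : ℕ → Pt) (hr : ∀ i : ℕ, 1 ≤ i → i ≤ k → r i ∈ P)
    (hinc : ∀ i : ℕ, 1 ≤ i → i < k → (r i) 1 < (r (i + 1)) 1) :
    (∀ i : ℕ, 1 ≤ i → i ≤ k → ∀ p ∈ P, ConnYMono E (r i) p) ↔
      ((∀ p ∈ P, p 1 < (r 1) 1 →
          ∃ q : Pt, s(p, q) ∈ E ∧ p 1 < q 1 ∧ q 1 ≤ (r 1) 1) ∧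
       (∀ p ∈ P, (r k) 1 < p 1 →
          ∃ q : Pt, s(p, q) ∈ E ∧ (r k) 1 ≤ q 1 ∧ q 1 < p 1) ∧
       (∀ i : ℕ, 1 ≤ i → i < k → ∀ p ∈ P, (r i) 1 < p 1 → p 1 < (r (i + 1)) 1 →
          ∃ q1 q2 : Pt, s(p, q1) ∈ E ∧ s(p, q2) ∈ E ∧
            (r i) 1 ≤ q1 1 ∧ q1 1 < p 1 ∧ p 1 < q2 1 ∧ q2 1 ≤ (r (i + 1)) 1) ∧
       (∃ q : Pt, s(r 1, q) ∈ E ∧ (r 1) 1 < q 1 ∧ q 1 ≤ (r 2) 1) ∧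
       (∃ q : Pt, s(r k, q) ∈ E ∧ (r (k - 1)) 1 ≤ q 1 ∧ q 1 < (r k) 1) ∧
       (∀ i : ℕ, 2 ≤ i → i ≤ k - 1 →
          ∃ q1 q2 : Pt, s(r i, q1) ∈ E ∧ s(r i, q2) ∈ E ∧
            (r (i - 1)) 1 ≤ q1 1 ∧ q1 1 < (r i) 1 ∧
            (r i) 1 < q2 1 ∧ q2 1 ≤ (r (i + 1)) 1)) := by
  have hinj : ∀ p ∈ P, ∀ q ∈ P, p 1 = q 1 → p = q := by
    intro p hp q hq h
    by_contra hne
    exact hy p hp q hq hne h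
  constructor
  · intro H
    refine ⟨?_, ?_, ?_, ?_, ?_, ?_⟩
    · intro p hp hpr
      exact extract_up hE hy (H 1 le_rfl (by omega) p hp) hpr
    · intro p hp hpr
      exact extract_down hE hy (H k (by omega) le_rfl p hp) hpr
    · intro i h1 h2 p hp hl hr'
      obtain ⟨q1, hq1, a1, a2⟩ := extract_down hE hy (H i h1 (by omega) p hp) hl
      obtain ⟨q2, hq2, b1, b2⟩ := extract_up hE hy (H (i + 1) (by omega) (by omega) p hp) hr'
      exact ⟨q1, q2, hq1, hq2, a1, a2, b1, b2⟩
    · exact extract_up hE hy (H 2 (by omega) (by omega) (r 1) (hr 1 le_rfl (by omega)))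
        (hinc 1 le_rfl hk1)
    · have hk : k - 1 + 1 = k := by omega
      have h12 : r (k - 1) 1 < r k 1 := by
        have := hinc (k - 1) (by omega) (by omega)
        rwa [hk] at this
      exact extract_down hE hy
        (H (k - 1) (by omega) (by omega) (r k) (hr k (by omega) le_rfl)) h12
    · intro i h2i hik
      have hik' : i + 1 ≤ k := by omega
      have hi : i - 1 + 1 = i := by omega
      have hdn : r (i - 1) 1 < r i 1 := by
        have := hinc (i - 1) (by omega) (by omega)
        rwa [hi] at this
      have hup : r i 1 < r (i + 1) 1 := hinc i (by omega) (by omega)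
      obtain ⟨q1, hq1, a1, a2⟩ := extract_down hE hy
        (H (i - 1) (by omega) (by omega) (r i) (hr i (by omega) (by omega))) hdn
      obtain ⟨q2, hq2, b1, b2⟩ := extract_up hE hy
        (H (i + 1) (by omega) hik' (r i) (hr i (by omega) (by omega))) hup
      exact ⟨q1, q2, hq1, hq2, a1, a2, b1, b2⟩
  · rintro ⟨c1, c2, c3, c4, c5, c6⟩ i h1i hik p hp
    have hriP : r i ∈ P := hr i h1i hik
    rcases lt_trichotomy (p 1) (r i 1) with hlt | heq | hgt
    · -- p strictly below r i : build an increasing path from p up to r i, then reverse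
      have step : ∀ x ∈ P, x 1 < r i 1 → ∃ q, s(x, q) ∈ E ∧ x 1 < q 1 ∧ q 1 ≤ r i 1 := by
        intro x hx hxr
        rcases lt_trichotomy (x 1) (r 1 1) with h | h | h
        · obtain ⟨q, hq, a, b⟩ := c1 x hx h
          exact ⟨q, hq, a, le_trans b (root_le hinc i 1 le_rfl h1i hik)⟩
        · have hx1 : x = r 1 := hinj x hx (r 1) (hr 1 le_rfl (by omega)) h
          have h2i : 2 ≤ i := by
            by_contra hc
            have hi1 : i = 1 := by omega
            rw [hi1, ← h] at hxr
            exact lt_irrefl _ hxr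
          obtain ⟨q, hq, a, b⟩ := c4
          refine ⟨q, by rw [hx1]; exact hq, by rw [hx1]; exact a,
            le_trans b (root_le hinc i 2 (by omega) h2i hik)⟩
        · have h1i' : 1 < i := by
            by_contra hc
            have hi1 : i = 1 := by omega
            rw [hi1] at hxr
            linarith
          obtain ⟨j, hj1, hj2, hj3, hj4⟩ := locate hinc (x 1) i 1 le_rfl h1i' hik h.le hxr
          rcases eq_or_lt_of_le hj3 with he | hl
          · have hxj : x = r j := hinj x hx (r j) (hr j hj1 (by omega)) he.symm
            have h2j : 2 ≤ j := by
              by_contra hc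
              have hj1' : j = 1 := by omega
              rw [hj1'] at he
              linarith
            obtain ⟨q1, q2, e1, e2, a1, a2, b1, b2⟩ := c6 j h2j (by omega)
            exact ⟨q2, by rw [hxj]; exact e2, by rw [hxj]; exact b1,
              le_trans b2 (root_le hinc i (j + 1) (by omega) hj2 hik)⟩
          · obtain ⟨q1, q2, e1, e2, a1, a2, b1, b2⟩ := c3 j hj1 (by omega) x hx hl hj4
            exact ⟨q2, e2, b1, le_trans b2 (root_le hinc i (j + 1) (by omega) hj2 hik)⟩
      obtain ⟨w, t, hpath, hmono⟩ := gen_up hE hinj hriP step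
        ((P.filter (btwOC (p 1) (r i 1))).card) p hp hlt le_rfl
      refine ⟨fun j => w (t - j), t, path_reverse hpath, Or.inr ?_⟩
      intro a b hab hbt
      exact hmono (t - b) (t - a) (by omega) (by omega)
    · have hpe : p = r i := hinj p hp (r i) hriP heq
      rw [hpe]
      exact ⟨fun _ => r i, 0, ⟨rfl, rfl, fun _ h => absurd h (by omega)⟩,
        Or.inl (fun _ _ _ _ => le_rfl)⟩
    · -- p strictly above r i : build a decreasing path from p down to r i, then reverse
      have step : ∀ x ∈ P, r i 1 < x 1 → ∃ q, s(x, q) ∈ E ∧ r i 1 ≤ q 1 ∧ q 1 < x 1 := by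
        intro x hx hrx
        rcases lt_trichotomy (r k 1) (x 1) with h | h | h
        · obtain ⟨q, hq, a, b⟩ := c2 x hx h
          exact ⟨q, hq, le_trans (root_le hinc k i h1i hik le_rfl) a, b⟩
        · have hxk : x = r k := hinj x hx (r k) (hr k (by omega) le_rfl) h.symm
          have hik' : i < k := by
            by_contra hc
            have hi1 : i = k := by omega
            rw [hi1, h] at hrx
            exact lt_irrefl _ hrx
          obtain ⟨q, hq, a, b⟩ := c5
          exact ⟨q, by rw [hxk]; exact hq,
            le_trans (root_le hinc (k - 1) i h1i (by omega) (by omega)) a,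
            by rw [hxk]; exact b⟩
        · have hik' : i < k := by
            by_contra hc
            have hi1 : i = k := by omega
            rw [hi1] at hrx
            linarith
          obtain ⟨j, hj1, hj2, hj3, hj4⟩ := locate hinc (x 1) k i h1i hik' le_rfl hrx.le h
          rcases eq_or_lt_of_le hj3 with he | hl
          · have hxj : x = r j := hinj x hx (r j) (hr j (by omega) (by omega)) he.symm
            have hij : i < j := by
              by_contra hc
              have hij' : i = j := by omega
              rw [← hij'] at he
              linarith
            obtain ⟨q1, q2, e1, e2, a1, a2, b1, b2⟩ := c6 j (by omega) (by omega)
            exact ⟨q1, by rw [hxj]; exact e1,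
              le_trans (root_le hinc (j - 1) i h1i (by omega) (by omega)) a1,
              by rw [hxj]; exact a2⟩
          · obtain ⟨q1, q2, e1, e2, a1, a2, b1, b2⟩ := c3 j (by omega) (by omega) x hx hl hj4
            exact ⟨q1, e1, le_trans (root_le hinc j i h1i hj1 (by omega)) a1, a2⟩
      obtain ⟨w, t, hpath, hmono⟩ := gen_down hE hinj hriP step
        ((P.filter (btwCO (r i 1) (p 1))).card) p hp hgt le_rfl
      refine ⟨fun j => w (t - j), t, path_reverse hpath, Or.inl ?_⟩
      intro a b hab hbt
      exact hmono (t - b) (t - a) (by omega) (by omega)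

end
end

section
/- Let P be a finite point set with distinct y-coordinates, all of which are designated as roots (k = |P|). Then the minimum-cost spanning graph of P in which every point is connected to every other point by a y-monotone path is exactly the geometric path that visits the points of P in increasing order of y-coordinate. -/
open scoped BigOperators

noncomputable section

lemma connYMono_symm (E : Finset (Sym2 Pt)) (a b : Pt)
    (h : ConnYMono E a b) : ConnYMono E b a := by
  obtain ⟨w, t, ⟨h0, ht, hedge⟩, hmono⟩ := h
  refine ⟨fun m => w (t - m), t, ⟨by simpa using ht, by simpa using h0, ?_⟩, ?_⟩
  · intro i hi
    have h1 : t - (i + 1) + 1 = t - i := by omega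
    show s(w (t - i), w (t - (i + 1))) ∈ E
    rw [Sym2.eq_swap, ← h1]
    exact hedge (t - (i + 1)) (by omega)
  · rcases hmono with hm | hm
    · exact Or.inr fun i j hij hjt => hm (t - j) (t - i) (by omega) (by omega)
    · exact Or.inl fun i j hij hjt => hm (t - j) (t - i) (by omega) (by omega)

/-- with all points as roots, the minimum-cost spanning graph connecting
every pair by `y`-monotone paths is exactly the `y`-sorted path. -/
theorem all_rooted_min_is_sorted_path (n : ℕ) (hn : 1 ≤ n) (p : ℕ → Pt)
    (hsort : ∀ i j : ℕ, i < j → j < n → (p i) 1 < (p j) 1)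
    (P : Finset Pt) (hP : P = (Finset.range n).image p)
    (Epath : Finset (Sym2 Pt))
    (hpath : ∀ a b : Pt, s(a, b) ∈ Epath ↔
      ∃ i : ℕ, i + 1 < n ∧ ((a = p i ∧ b = p (i + 1)) ∨ (a = p (i + 1) ∧ b = p i)))
    (E : Finset (Sym2 Pt)) (hE : IsGraphOn P E)
    (hconn : ∀ a ∈ P, ∀ b ∈ P, ConnYMono E a b)
    (hmin : ∀ E' : Finset (Sym2 Pt), IsGraphOn P E' →
      (∀ a ∈ P, ∀ b ∈ P, ConnYMono E' a b) → cost E ≤ cost E') :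
    E = Epath := by
  classical
  have hinP : ∀ i, i < n → p i ∈ P := by
    intro i hi
    rw [hP]; exact Finset.mem_image_of_mem _ (Finset.mem_range.mpr hi)
  have hle : ∀ k l : ℕ, k ≤ l → l < n → (p k) 1 ≤ (p l) 1 := by
    intro k l hkl hln
    rcases eq_or_lt_of_le hkl with h | h
    · rw [h]
    · exact le_of_lt (hsort k l h hln)
  have hne : ∀ i, i + 1 < n → p i ≠ p (i + 1) := by
    intro i hi h
    have := hsort i (i + 1) (Nat.lt_succ_self i) hi
    rw [h] at this; exact lt_irrefl _ this
  -- Epath is a graph on P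
  have hEpathGraph : IsGraphOn P Epath := by
    intro a b hab
    obtain ⟨i, hi, h⟩ := (hpath a b).1 hab
    rcases h with ⟨ha, hb⟩ | ⟨ha, hb⟩ <;> subst ha <;> subst hb
    · exact ⟨hinP i (by omega), hinP (i + 1) hi, hne i hi⟩
    · exact ⟨hinP (i + 1) hi, hinP i (by omega), (hne i hi).symm⟩
  -- Epath connects increasing index pairs
  have hconnP : ∀ i j : ℕ, i ≤ j → j < n → ConnYMono Epath (p i) (p j) := by
    intro i j hij hjn
    refine ⟨fun m => p (min (i + m) j), j - i, ⟨?_, ?_, ?_⟩, ?_⟩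
    · show p (min (i + 0) j) = p i
      have h1 : min (i + 0) j = i := by omega
      rw [h1]
    · show p (min (i + (j - i)) j) = p j
      have h1 : min (i + (j - i)) j = j := by omega
      rw [h1]
    · intro m hm
      show s(p (min (i + m) j), p (min (i + (m + 1)) j)) ∈ Epath
      have h1 : min (i + m) j = i + m := by omega
      have h2 : min (i + (m + 1)) j = i + m + 1 := by omega
      rw [h1, h2]
      exact (hpath _ _).2 ⟨i + m, by omega, Or.inl ⟨rfl, rfl⟩⟩
    · exact Or.inl fun a b hab hbt =>
        hle (min (i + a) j) (min (i + b) j) (by omega) (by omega)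
  have hEpathConn : ∀ a ∈ P, ∀ b ∈ P, ConnYMono Epath a b := by
    intro a ha b hb
    rw [hP] at ha hb
    obtain ⟨i, hi, rfl⟩ := Finset.mem_image.1 ha
    obtain ⟨j, hj, rfl⟩ := Finset.mem_image.1 hb
    rw [Finset.mem_range] at hi hj
    rcases le_total i j with h | h
    · exact hconnP i j h hj
    · exact connYMono_symm _ _ _ (hconnP j i h hi)
  -- Every edge of Epath is in E
  have hsub : Epath ⊆ E := by
    intro e he
    induction e using Sym2.ind with
    | _ a b =>
    obtain ⟨i, hi, hcase⟩ := (hpath a b).1 he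
    have key : s(p i, p (i + 1)) ∈ E := by
      obtain ⟨w, t, ⟨h0, ht, hedge⟩, hmono⟩ :=
        hconn (p i) (hinP i (by omega)) (p (i + 1)) (hinP (i + 1) hi)
      have htpos : 0 < t := by
        rcases Nat.eq_zero_or_pos t with h | h
        · exfalso; apply hne i hi; rw [← h0, ← ht, h]
        · exact h
      have hmem : ∀ m, m ≤ t → w m ∈ P := by
        intro m hm
        rcases Nat.lt_or_ge m t with h | h
        · exact (hE _ _ (hedge m h)).1
        · have hm' : m = t := le_antisymm hm h
          have := (hE _ _ (hedge (t - 1) (by omega))).2.1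
          have h1 : t - 1 + 1 = t := by omega
          rw [h1] at this; rwa [hm']
      have hmono' : ∀ m, m ≤ t → (p i) 1 ≤ (w m) 1 ∧ (w m) 1 ≤ (p (i + 1)) 1 := by
        rcases hmono with hm | hm
        · intro m hmt
          constructor
          · rw [← h0]; exact hm 0 m (Nat.zero_le _) hmt
          · rw [← ht]; exact hm m t hmt le_rfl
        · exfalso
          have h2 : (p (i + 1)) 1 ≤ (p i) 1 := by
            simpa [h0, ht] using hm 0 t (Nat.zero_le _) le_rfl
          exact absurd h2 (not_le.2 (hsort i (i + 1) (Nat.lt_succ_self i) hi))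
      have hval : ∀ m, m ≤ t → w m = p i ∨ w m = p (i + 1) := by
        intro m hm
        have hmP := hmem m hm
        rw [hP] at hmP
        obtain ⟨k, hk, hkw⟩ := Finset.mem_image.1 hmP
        rw [Finset.mem_range] at hk
        obtain ⟨hlo, hhi⟩ := hmono' m hm
        rcases Nat.lt_trichotomy k i with h | h | h
        · exfalso
          have := hsort k i h (by omega)
          rw [← hkw] at hlo; linarith
        · left; rw [← hkw, h]
        · rcases Nat.lt_or_ge (i + 1) k with h' | h'
          · exfalso
            have := hsort (i + 1) k h' hk
            rw [← hkw] at hhi; linarith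
          · right; rw [← hkw]
            have h2 : k = i + 1 := by omega
            rw [h2]
      -- first index where w = p (i+1)
      have hex : ∃ m, w m = p (i + 1) := ⟨t, ht⟩
      set m := Nat.find hex with hm
      have hmspec : w m = p (i + 1) := Nat.find_spec hex
      have hmle : m ≤ t := Nat.find_le ht
      have hmpos : 0 < m := by
        rcases Nat.eq_zero_or_pos m with h | h
        · exfalso
          have := hmspec; rw [h, h0] at this
          exact hne i hi this
        · exact h
      have hprev : w (m - 1) = p i := by
        have hlt : m - 1 < m := by omega
        have := Nat.find_min hex hlt
        rcases hval (m - 1) (by omega) with h | h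
        · exact h
        · exact absurd h this
      have := hedge (m - 1) (by omega)
      have h1 : m - 1 + 1 = m := by omega
      rw [h1, hprev, hmspec] at this
      exact this
    rcases hcase with ⟨ha, hb⟩ | ⟨ha, hb⟩ <;> subst ha <;> subst hb
    · exact key
    · rwa [Sym2.eq_swap]
  -- cost comparison
  have hcostle : cost E ≤ cost Epath := hmin Epath hEpathGraph hEpathConn
  have hnonneg : ∀ e ∈ E,
      0 ≤ Sym2.lift ⟨fun p q => dist p q, fun p q => dist_comm p q⟩ e := by
    intro e _
    induction e using Sym2.ind with
    | _ a b => simpa using dist_nonneg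
  refine Finset.Subset.antisymm ?_ hsub
  intro e heE
  by_contra heP
  have hsdiff : cost (E \ Epath) + cost Epath = cost E :=
    Finset.sum_sdiff hsub
  have hd0 : cost (E \ Epath) ≤ 0 := by linarith
  have hemem : e ∈ E \ Epath := Finset.mem_sdiff.2 ⟨heE, heP⟩
  have hpos : 0 < Sym2.lift ⟨fun p q => dist p q, fun p q => dist_comm p q⟩ e := by
    induction e using Sym2.ind with
    | _ a b =>
      have := (hE a b heE).2.2
      simpa using dist_pos.2 this
  have hsum : Sym2.lift ⟨fun p q => dist p q, fun p q => dist_comm p q⟩ e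
      ≤ cost (E \ Epath) :=
    Finset.single_le_sum (fun x hx => hnonneg x (Finset.mem_sdiff.1 hx).1) hemem
  linarith

end
end

section
/- Let P be a finite point set with distinct y-coordinates and let r ∈ P be a designated root. The minimum-cost rooted y-monotone spanning graph of P with root r is the edge-disjoint union of the minimum-cost rooted y-monotone spanning graph of P_{y ≤ y(r)} with root r and the minimum-cost rooted y-monotone spanning graph of P_{y ≥ y(r)} with root r. -/
open scoped BigOperators

noncomputable section

lemma sym2_cases (e : Sym2 Pt) : ∃ p q, e = s(p, q) := by
  induction e using Sym2.ind with
  | _ p q => exact ⟨p, q, rfl⟩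

lemma edge_nonneg (e : Sym2 Pt) :
    0 ≤ Sym2.lift ⟨fun p q => dist p q, fun p q => dist_comm p q⟩ e := by
  induction e using Sym2.ind with
  | _ p q => simpa using dist_nonneg

lemma cost_mono {E F : Finset (Sym2 Pt)} (h : E ⊆ F) : cost E ≤ cost F :=
  Finset.sum_le_sum_of_subset_of_nonneg h (fun e _ _ => edge_nonneg e)

lemma monoTo_between {f : ℕ → ℝ} {t : ℕ} (h : MonoTo f t) {i : ℕ} (hi : i ≤ t) :
    (f 0 ≤ f i ∧ f i ≤ f t) ∨ (f t ≤ f i ∧ f i ≤ f 0) := by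
  rcases h with h | h
  · exact Or.inl ⟨h 0 i (Nat.zero_le _) hi, h i t hi le_rfl⟩
  · exact Or.inr ⟨h i t hi le_rfl, h 0 i (Nat.zero_le _) hi⟩

lemma connYMono_mono {E F : Finset (Sym2 Pt)} (h : E ⊆ F) {a b : Pt}
    (hc : ConnYMono E a b) : ConnYMono F a b := by
  obtain ⟨w, t, ⟨h0, ht, he⟩, hm⟩ := hc
  exact ⟨w, t, ⟨h0, ht, fun i hi => h (he i hi)⟩, hm⟩

lemma restrict_span (P V : Finset Pt) (r : Pt) (c : ℝ → Prop)
    (hconv : ∀ a b x : ℝ, c a → c b → a ≤ x → x ≤ b → c x)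
    (hcr : c (r 1))
    (hV : ∀ p, p ∈ V ↔ p ∈ P ∧ c (p 1))
    (E' : Finset (Sym2 Pt)) (hE' : RootedSpan P {r} E') :
    ∃ F ⊆ E', RootedSpan V {r} F ∧ ∀ p q : Pt, s(p, q) ∈ F → c (p 1) ∧ c (q 1) := by
  classical
  obtain ⟨hG, hconn⟩ := hE'
  refine ⟨E'.filter (fun e => ∀ x ∈ e, c (x 1)), Finset.filter_subset _ _, ⟨?_, ?_⟩, ?_⟩
  · intro p q hpq
    rw [Finset.mem_filter] at hpq
    obtain ⟨h1, h2⟩ := hpq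
    obtain ⟨hp, hq, hne⟩ := hG p q h1
    refine ⟨(hV p).mpr ⟨hp, h2 p ?_⟩, (hV q).mpr ⟨hq, h2 q ?_⟩, hne⟩
    · exact Sym2.mem_iff.mpr (Or.inl rfl)
    · exact Sym2.mem_iff.mpr (Or.inr rfl)
  · intro r' hr' p hp
    simp only [Finset.mem_singleton] at hr'
    rw [hr']
    obtain ⟨hpP, hpc⟩ := (hV p).mp hp
    obtain ⟨w, t, hpath, hmono⟩ := hconn r (Finset.mem_singleton_self r) p hpP
    have hm : MonoTo (fun i => w i 1) t := hmono
    have hcy : ∀ i ≤ t, c (w i 1) := by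
      intro i hi
      have hb := monoTo_between hm hi
      have h0 : c (w 0 1) := by rw [hpath.1]; exact hcr
      have htv : c (w t 1) := by rw [hpath.2.1]; exact hpc
      simp only at hb
      rcases hb with ⟨ha, hb⟩ | ⟨ha, hb⟩
      · exact hconv _ _ _ h0 htv ha hb
      · exact hconv _ _ _ htv h0 ha hb
    refine ⟨w, t, ⟨hpath.1, hpath.2.1, ?_⟩, hmono⟩
    intro i hi
    refine Finset.mem_filter.mpr ⟨hpath.2.2 i hi, ?_⟩
    intro x hx
    rw [Sym2.mem_iff] at hx
    rcases hx with rfl | rfl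
    · exact hcy i (le_of_lt hi)
    · exact hcy (i + 1) hi
  · intro p q hpq
    rw [Finset.mem_filter] at hpq
    exact ⟨hpq.2 p (Sym2.mem_iff.mpr (Or.inl rfl)),
           hpq.2 q (Sym2.mem_iff.mpr (Or.inr rfl))⟩

/-- the minimum-cost rooted `y`-monotone spanning graph of `P` is the
edge-disjoint union of the minimum-cost pieces below and above the root. -/
theorem rooted_min_decomposition (P : Finset Pt)
    (hy : ∀ p ∈ P, ∀ q ∈ P, p ≠ q → p 1 ≠ q 1)
    (r : Pt) (hr : r ∈ P)
    (Elow Ehigh : Finset (Sym2 Pt))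
    (hlow : IsMinRooted (P.filter fun p => p 1 ≤ r 1) {r} Elow)
    (hhigh : IsMinRooted (P.filter fun p => r 1 ≤ p 1) {r} Ehigh) :
    Disjoint Elow Ehigh ∧ IsMinRooted P {r} (Elow ∪ Ehigh) := by
  classical
  have heq : ∀ p ∈ P, p 1 = r 1 → p = r := by
    intro p hp h
    by_contra hne
    exact hy p hp r hr hne h
  have hdisj : Disjoint Elow Ehigh := by
    rw [Finset.disjoint_left]
    intro e he1 he2
    obtain ⟨p, q, rfl⟩ := sym2_cases e
    obtain ⟨hp1, hq1, hne⟩ := hlow.1.1 p q he1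
    obtain ⟨hp2, hq2, -⟩ := hhigh.1.1 p q he2
    rw [Finset.mem_filter] at hp1 hq1 hp2 hq2
    have hpr : p = r := heq p hp1.1 (le_antisymm hp1.2 hp2.2)
    have hqr : q = r := heq q hq1.1 (le_antisymm hq1.2 hq2.2)
    exact hne (hpr.trans hqr.symm)
  refine ⟨hdisj, ⟨?_, ?_⟩, ?_⟩
  · -- IsGraphOn P (Elow ∪ Ehigh)
    intro p q hpq
    rw [Finset.mem_union] at hpq
    rcases hpq with h | h
    · obtain ⟨hp, hq, hne⟩ := hlow.1.1 p q h
      rw [Finset.mem_filter] at hp hq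
      exact ⟨hp.1, hq.1, hne⟩
    · obtain ⟨hp, hq, hne⟩ := hhigh.1.1 p q h
      rw [Finset.mem_filter] at hp hq
      exact ⟨hp.1, hq.1, hne⟩
  · -- connectivity
    intro r' hr' p hp
    simp only [Finset.mem_singleton] at hr'
    rw [hr']
    rcases le_total (p 1) (r 1) with h | h
    · exact connYMono_mono Finset.subset_union_left
        (hlow.1.2 r (Finset.mem_singleton_self r) p (Finset.mem_filter.mpr ⟨hp, h⟩))
    · exact connYMono_mono Finset.subset_union_right
        (hhigh.1.2 r (Finset.mem_singleton_self r) p (Finset.mem_filter.mpr ⟨hp, h⟩))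
  · -- minimality
    intro E' hE'
    obtain ⟨Flow, hFsub, hFspan, hFc⟩ :=
      restrict_span P (P.filter fun p => p 1 ≤ r 1) r (fun y => y ≤ r 1)
        (fun a b x _ hb _ hxb => le_trans hxb hb) le_rfl
        (fun p => Finset.mem_filter) E' hE'
    obtain ⟨Ghigh, hGsub, hGspan, hGc⟩ :=
      restrict_span P (P.filter fun p => r 1 ≤ p 1) r (fun y => r 1 ≤ y)
        (fun a b x ha _ hax _ => le_trans ha hax) le_rfl
        (fun p => Finset.mem_filter) E' hE'
    have hFG : Disjoint Flow Ghigh := by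
      rw [Finset.disjoint_left]
      intro e he1 he2
      obtain ⟨p, q, rfl⟩ := sym2_cases e
      obtain ⟨hp1, hq1⟩ := hFc p q he1
      obtain ⟨hp2, hq2⟩ := hGc p q he2
      obtain ⟨hpP, hqP, hne⟩ := hE'.1 p q (hFsub he1)
      have hpr : p = r := heq p hpP (le_antisymm hp1 hp2)
      have hqr : q = r := heq q hqP (le_antisymm hq1 hq2)
      exact hne (hpr.trans hqr.symm)
    calc cost (Elow ∪ Ehigh) = cost Elow + cost Ehigh := Finset.sum_union hdisj
      _ ≤ cost Flow + cost Ghigh :=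
          add_le_add (hlow.2 Flow hFspan) (hhigh.2 Ghigh hGspan)
      _ = cost (Flow ∪ Ghigh) := (Finset.sum_union hFG).symm
      _ ≤ cost E' := cost_mono (Finset.union_subset hFsub hGsub)

end
end
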